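/- arXiv:math/0310402 — 3 statements merged into one kernel-verified Lean document; each statement's English description precedes it below -/
import Mathlib

section
/- The quadratic form Q(x,y) = x² − (3 + 2√2)y² on ℝ² is real, indefinite, nondegenerate, is not a scalar multiple of a form with integer coefficients, and Q(ℤ²) is not dense in ℝ. -/
/-!
Write `ε = 1 + √2` (the silver ratio), so that `3 + 2√2 = ε²` and `x² - ε²y²` factors over
`ℤ[√2]`. For integers `a, b ≥ 0` put `u = a - εb`; then `a² - ε²b² = (a² - 2ab - b²) + 2bu`, and
`a² - 2ab - b² = u (u + 2√2 b)` is the norm of `a - εb`. A positive value forces `u > 0`, so this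
norm is a positive integer and the value is at least `1`: the interval `(0, 1)` contains no value
of the form on `ℤ²`. The other properties are read off the coefficients, using that `√2` is
irrational.
-/

open Real Set

noncomputable def silverForm (x y : ℝ) : ℝ := x ^ 2 - (3 + 2 * √2) * y ^ 2

lemma silverForm_eq_norm_add (x y : ℝ) :
    silverForm x y = (x ^ 2 - 2 * x * y - y ^ 2) + 2 * y * (x - (1 + √2) * y) := by
  unfold silverForm
  ring

lemma silverForm_abs (x y : ℝ) : silverForm |x| |y| = silverForm x y := by
  simp only [silverForm, sq_abs]

lemma one_le_silverForm_of_nonneg {a b : ℤ} (ha : 0 ≤ a) (hb : 0 ≤ b)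
    (hpos : 0 < silverForm a b) : 1 ≤ silverForm a b := by
  have ha' : (0 : ℝ) ≤ a := by exact_mod_cast ha
  have hb' : (0 : ℝ) ≤ b := by exact_mod_cast hb
  have hs : √2 ^ 2 = 2 := sq_sqrt zero_le_two
  have hu : 0 < (a : ℝ) - (1 + √2) * b := by
    have hsq : ((1 + √2) * b) ^ 2 < (a : ℝ) ^ 2 := by
      unfold silverForm at hpos
      linear_combination hpos + b ^ 2 * hs
    linarith [lt_of_pow_lt_pow_left₀ 2 ha' hsq]
  have hnorm : (0 : ℝ) < ((a ^ 2 - 2 * a * b - b ^ 2 : ℤ) : ℝ) := by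
    have hfactor : ((a ^ 2 - 2 * a * b - b ^ 2 : ℤ) : ℝ) =
        ((a : ℝ) - (1 + √2) * b) * ((a : ℝ) - (1 + √2) * b + 2 * √2 * b) := by
      push_cast
      linear_combination (b : ℝ) ^ 2 * hs
    rw [hfactor]
    positivity
  have hnorm_one : (1 : ℝ) ≤ ((a ^ 2 - 2 * a * b - b ^ 2 : ℤ) : ℝ) := by
    exact_mod_cast (show (0 : ℤ) < _ by exact_mod_cast hnorm)
  rw [silverForm_eq_norm_add]
  push_cast at hnorm_one
  linarith [mul_nonneg hb' hu.le]

lemma one_le_silverForm_intCast {a b : ℤ} (hpos : 0 < silverForm a b) : 1 ≤ silverForm a b := by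
  have key := @one_le_silverForm_of_nonneg |a| |b| (abs_nonneg a) (abs_nonneg b)
  push_cast at key
  rw [silverForm_abs] at key
  exact key hpos

lemma not_dense_range_silverForm :
    ¬ Dense (range fun v : ℤ × ℤ => silverForm v.1 v.2) := by
  intro hdense
  obtain ⟨_, ⟨⟨a, b⟩, rfl⟩, hpos, hlt⟩ := hdense.exists_between zero_lt_one
  exact (one_le_silverForm_intCast hpos).not_gt hlt

lemma silverForm_add_sub_sub (w v : ℝ × ℝ) :
    silverForm (w.1 + v.1) (w.2 + v.2) - silverForm (w.1 - v.1) (w.2 - v.2) =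
      4 * (w.1 * v.1 - (3 + 2 * √2) * w.2 * v.2) := by
  unfold silverForm
  ring

lemma eq_zero_of_silverForm_add_eq_sub {v : ℝ × ℝ}
    (hv : ∀ w : ℝ × ℝ, silverForm (w.1 + v.1) (w.2 + v.2) = silverForm (w.1 - v.1) (w.2 - v.2)) :
    v = 0 := by
  have h₁ := silverForm_add_sub_sub (1, 0) v
  have h₂ := silverForm_add_sub_sub (0, 1) v
  rw [hv, sub_self] at h₁ h₂
  norm_num at h₁ h₂
  exact Prod.ext h₁ (h₂.resolve_left (by positivity))

lemma silverForm_not_smul_int (k : ℝ) (m p r : ℤ) (hk : k ≠ 0) :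
    ¬ ∀ x y : ℝ, k * silverForm x y = m * x ^ 2 + p * x * y + r * y ^ 2 := by
  intro h
  have h₁₀ := h 1 0
  have h₀₁ := h 0 1
  simp only [silverForm] at h₁₀ h₀₁
  have hkm : k = m := by linear_combination h₁₀
  have hm : m ≠ 0 := by rintro rfl; exact hk (by simpa using hkm)
  have hrat : ((2 * m : ℤ) : ℝ) * √2 = ((-r - 3 * m : ℤ) : ℝ) := by
    push_cast
    linear_combination (-1) * h₀₁ - (3 + 2 * √2) * hkm
  have hirr : Irrational (((2 * m : ℤ) : ℝ) * √2) := irrational_sqrt_two.intCast_mul (by omega)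
  exact (hrat ▸ hirr).ne_int _ rfl

theorem stmt7 (Q : ℝ → ℝ → ℝ)
    (hQ : ∀ x y, Q x y = x^2 - (3 + 2 * Real.sqrt 2) * y^2) :
    ((∃ x y : ℝ, 0 < Q x y) ∧ (∃ x y : ℝ, Q x y < 0)) ∧
    (¬ ∃ v : ℝ × ℝ, v ≠ 0 ∧
        ∀ w : ℝ × ℝ, Q (w.1 + v.1) (w.2 + v.2) = Q (w.1 - v.1) (w.2 - v.2)) ∧
    (¬ ∃ (k : ℝ) (m p r : ℤ), k ≠ 0 ∧
        ∀ x y : ℝ, k * Q x y = (m : ℝ) * x^2 + (p : ℝ) * x * y + (r : ℝ) * y^2) ∧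
    ¬ Dense (Set.range fun v : ℤ × ℤ => Q (v.1 : ℝ) (v.2 : ℝ)) := by
  obtain rfl : Q = silverForm := funext₂ hQ
  refine ⟨⟨⟨1, 0, by norm_num [silverForm]⟩,
    ⟨0, 1, by simp only [silverForm]; nlinarith [sqrt_nonneg 2]⟩⟩,
    ?_, ?_, not_dense_range_silverForm⟩
  · rintro ⟨v, hv, h⟩
    exact hv (eq_zero_of_silverForm_add_eq_sub h)
  · rintro ⟨k, m, p, r, hk, h⟩
    exact silverForm_not_smul_int k m p r hk h
end

section
/- For every natural number d and every δ > 0, there exists ε > 0 such that for every real polynomial f of degree at most d, every C > 0, and every interval [k, k+ℓ], if |f(t)| < C for all t ∈ [k, k+ℓ], then |f(t)| < (1+δ)C for all t ∈ [k, k+(1+ε)ℓ]. -/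
open Finset Polynomial

theorem stmt12 (d : ℕ) (δ : ℝ) (hδ : 0 < δ) :
    ∃ ε > (0 : ℝ), ∀ f : Polynomial ℝ, f.natDegree ≤ d → ∀ C k ℓ : ℝ, 0 < C → 0 < ℓ →
      (∀ t ∈ Set.Icc k (k + ℓ), |f.eval t| < C) →
      ∀ t ∈ Set.Icc k (k + (1 + ε) * ℓ), |f.eval t| < (1 + δ) * C := by
  set D := max d 1 with hDdef
  have hD1 : 1 ≤ D := le_max_right d 1
  have hDne : (D : ℝ) ≠ 0 := by positivity
  set S : ℝ → ℝ := fun s => ∑ i ∈ Finset.range (D+1),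
      |∏ j ∈ (Finset.range (D+1)).erase i, (((i:ℝ) - j)⁻¹ * (s * D - j))| with hSdef
  have hScont : Continuous S := by
    apply continuous_finset_sum
    intro i _
    apply Continuous.abs
    apply continuous_finset_prod
    intro j _
    fun_prop
  have hS1 : S 1 = 1 := by
    simp only [hSdef]
    rw [Finset.sum_eq_single D]
    · rw [Finset.prod_congr rfl (fun j hj => ?_), Finset.prod_const_one, abs_one]
      have hj' := Finset.mem_erase.mp hj
      have : ((D:ℝ) - j) ≠ 0 := by
        have : (j:ℝ) ≠ D := by exact_mod_cast hj'.1
        intro h; apply this; linarith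
      rw [one_mul]
      field_simp
    · intro i hi hiD
      have hDmem : D ∈ (Finset.range (D+1)).erase i := by
        simp [Finset.mem_erase, Ne.symm hiD]
      rw [abs_eq_zero]
      apply Finset.prod_eq_zero hDmem
      simp
    · intro h; exact absurd (Finset.self_mem_range_succ D) h
  have hev : ∀ᶠ s in nhds (1:ℝ), S s < 1 + δ := by
    have : Set.Iio (1 + δ) ∈ nhds (S 1) := by
      apply Iio_mem_nhds; rw [hS1]; linarith
    exact hScont.continuousAt.preimage_mem_nhds this
  obtain ⟨ε, hε, hball⟩ := Metric.eventually_nhds_iff.mp hev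
  refine ⟨ε/2, by positivity, ?_⟩
  intro f hf C k ℓ hC hℓ hbd t ht
  rcases le_or_gt t (k + ℓ) with h1 | h1
  · exact (hbd t ⟨ht.1, h1⟩).trans_le (by nlinarith)
  · set σ : ℝ := (t - k)/ℓ with hσdef
    have hσℓ : σ * ℓ = t - k := div_mul_cancel₀ _ hℓ.ne'
    have hσ1 : 1 < σ := by
      rw [lt_div_iff₀ hℓ]; linarith
    have hσ2 : σ ≤ 1 + ε/2 := by
      rw [div_le_iff₀ hℓ]
      have := ht.2
      nlinarith
    set v : ℕ → ℝ := fun i => k + i * (ℓ / D) with hvdef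
    have hℓD : 0 < ℓ / D := by positivity
    have hinj : Set.InjOn v (Finset.range (D+1)) := by
      intro a _ b _ hab
      have hab' : k + (a:ℝ) * (ℓ/D) = k + (b:ℝ) * (ℓ/D) := hab
      have h2 : (a : ℝ) * (ℓ/D) = b * (ℓ/D) := by linarith
      have : (a : ℝ) = b := mul_right_cancel₀ (ne_of_gt hℓD) h2
      exact_mod_cast this
    have hdeg : f.degree < ((Finset.range (D+1)).card : WithBot ℕ) := by
      rw [Finset.card_range]
      calc f.degree ≤ (f.natDegree : WithBot ℕ) := Polynomial.degree_le_natDegree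
        _ ≤ (D : WithBot ℕ) := by
            exact_mod_cast Nat.cast_le.mpr (le_trans hf (le_max_left d 1))
        _ < ((D+1 : ℕ) : WithBot ℕ) := by exact_mod_cast Nat.lt_succ_self D
    have heq := Lagrange.eq_interpolate hinj hdeg
    have hevalt : f.eval t = ∑ i ∈ Finset.range (D+1),
        f.eval (v i) * (Lagrange.basis (Finset.range (D+1)) v i).eval t := by
      conv_lhs => rw [heq]
      rw [Lagrange.interpolate_apply, Polynomial.eval_finset_sum]
      exact Finset.sum_congr rfl fun i _ => by rw [Polynomial.eval_mul, Polynomial.eval_C]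
    have hbasis : ∀ i ∈ Finset.range (D+1), (Lagrange.basis (Finset.range (D+1)) v i).eval t
        = ∏ j ∈ (Finset.range (D+1)).erase i, (((i:ℝ) - j)⁻¹ * (σ * D - j)) := by
      intro i hi
      rw [Lagrange.basis, Polynomial.eval_prod]
      refine Finset.prod_congr rfl fun j hj => ?_
      have hij : (i : ℝ) ≠ j := by
        have := (Finset.mem_erase.mp hj).1
        exact_mod_cast (Ne.symm this)
      have h1 : v i - v j = ((i:ℝ) - j) * (ℓ/D) := by
        simp only [hvdef]; ring
      have h2 : t - v j = (σ * D - j) * (ℓ/D) := by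
        simp only [hvdef]
        have : t = σ * ℓ + k := by rw [hσℓ]; ring
        rw [this]
        field_simp
        ring
      simp only [Lagrange.basisDivisor, Polynomial.eval_mul, Polynomial.eval_C,
        Polynomial.eval_sub, Polynomial.eval_X]
      rw [show t - v j = (σ * D - j) * (ℓ/D) from h2, h1]
      rw [mul_inv]
      have hsub : (i:ℝ) - j ≠ 0 := sub_ne_zero.mpr hij
      field_simp
    have hnode : ∀ i ∈ Finset.range (D+1), |f.eval (v i)| < C := by
      intro i hi
      apply hbd
      have hiD : (i : ℝ) ≤ D := by
        exact_mod_cast Nat.lt_succ_iff.mp (Finset.mem_range.mp hi)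
      constructor
      · simp only [hvdef]; nlinarith
      · simp only [hvdef]
        have h3 : (i:ℝ) * (ℓ/D) ≤ (D:ℝ) * (ℓ/D) :=
          mul_le_mul_of_nonneg_right hiD hℓD.le
        have h4 : (D:ℝ) * (ℓ/D) = ℓ := by field_simp
        linarith
    have hSσ : S σ < 1 + δ := by
      apply hball
      rw [Real.dist_eq, abs_of_pos (by linarith : (0:ℝ) < σ - 1)]
      linarith
    calc |f.eval t| = |∑ i ∈ Finset.range (D+1),
            f.eval (v i) * (Lagrange.basis (Finset.range (D+1)) v i).eval t| := by rw [hevalt]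
      _ ≤ ∑ i ∈ Finset.range (D+1),
            |f.eval (v i) * (Lagrange.basis (Finset.range (D+1)) v i).eval t| :=
          Finset.abs_sum_le_sum_abs _ _
      _ ≤ ∑ i ∈ Finset.range (D+1),
            C * |(Lagrange.basis (Finset.range (D+1)) v i).eval t| := by
          refine Finset.sum_le_sum fun i hi => ?_
          rw [abs_mul]
          exact mul_le_mul_of_nonneg_right (le_of_lt (hnode i hi)) (abs_nonneg _)
      _ = C * S σ := by
          rw [Finset.mul_sum]
          refine Finset.sum_congr rfl fun i hi => ?_
          rw [hbasis i hi]
      _ < C * (1 + δ) := by exact (mul_lt_mul_iff_right₀ hC).mpr hSσ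
      _ = (1 + δ) * C := by ring
end

section
/- (Maximal Ergodic Theorem) Let φ : X → X be a measurable bijection, μ a φ-invariant probability measure on X, f ∈ L¹(X,μ), and S_n(x) = f(x) + f(φ(x)) + ⋯ + f(φ^{n−1}(x)). For α ∈ ℝ, set E = { x ∈ X : sup_n S_n(x)/n > α }. Then ∫_E f dμ ≥ α·μ(E). -/
/-!
Subtracting `α` from `f` reduces the claim to `∫_E g ≥ 0` for `g = f - α` and
`E = {x | ∃ n, 0 < S_n g x}`. With `M_N = max_{0 ≤ n ≤ N} S_n g` we have `M_N ≤ g + M_N ∘ φ` on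
`{M_N > 0}` (Garsia), so `∫_{M_N > 0} g ≥ ∫ M_N - ∫ M_N ∘ φ = 0` by invariance of `μ`; the sets
`{M_N > 0}` increase to `E`.
-/

open MeasureTheory Finset

namespace MeasureTheory

variable {X : Type*} {φ : X → X} {g : X → ℝ}

noncomputable def maxBirkhoffSum (φ : X → X) (g : X → ℝ) (N : ℕ) : X → ℝ :=
  (range (N + 1)).sup' nonempty_range_add_one (birkhoffSum φ g)

theorem maxBirkhoffSum_apply (N : ℕ) (x : X) :
    maxBirkhoffSum φ g N x = (range (N + 1)).sup' nonempty_range_add_one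
      fun n => birkhoffSum φ g n x :=
  Finset.sup'_apply _ _ _

theorem birkhoffSum_le_maxBirkhoffSum {n N : ℕ} (h : n ≤ N) (x : X) :
    birkhoffSum φ g n x ≤ maxBirkhoffSum φ g N x := by
  rw [maxBirkhoffSum_apply]
  exact le_sup' (fun n => birkhoffSum φ g n x) (mem_range_succ_iff.mpr h)

theorem maxBirkhoffSum_nonneg (N : ℕ) (x : X) : 0 ≤ maxBirkhoffSum φ g N x :=
  birkhoffSum_zero φ g x ▸ birkhoffSum_le_maxBirkhoffSum N.zero_le x

theorem exists_birkhoffSum_eq_maxBirkhoffSum (N : ℕ) (x : X) :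
    ∃ n ≤ N, birkhoffSum φ g n x = maxBirkhoffSum φ g N x := by
  obtain ⟨n, hn, h⟩ := exists_mem_eq_sup' nonempty_range_add_one fun n => birkhoffSum φ g n x
  exact ⟨n, mem_range_succ_iff.mp hn, by rw [maxBirkhoffSum_apply, h]⟩

theorem monotone_maxBirkhoffSum (x : X) : Monotone fun N => maxBirkhoffSum φ g N x := by
  intro N N' h
  obtain ⟨n, hn, hmax⟩ := exists_birkhoffSum_eq_maxBirkhoffSum (φ := φ) (g := g) N x
  exact hmax.symm.trans_le (birkhoffSum_le_maxBirkhoffSum (hn.trans h) x)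

/-- Where the running maximum is positive it is attained by a sum of positive length, which
splits off `g x` and leaves a shorter sum starting at `φ x`. -/
theorem maxBirkhoffSum_sub_maxBirkhoffSum_apply_le {N : ℕ} {x : X}
    (hx : 0 < maxBirkhoffSum φ g N x) :
    maxBirkhoffSum φ g N x - maxBirkhoffSum φ g N (φ x) ≤ g x := by
  obtain ⟨n, hnN, hn⟩ := exists_birkhoffSum_eq_maxBirkhoffSum (φ := φ) (g := g) N x
  obtain _ | m := n
  · rw [← hn, birkhoffSum_zero] at hx
    exact (lt_irrefl 0 hx).elim
  · have hm : birkhoffSum φ g m (φ x) ≤ maxBirkhoffSum φ g N (φ x) :=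
      birkhoffSum_le_maxBirkhoffSum (by omega) (φ x)
    rw [← hn, birkhoffSum_succ']
    linarith

theorem iUnion_setOf_maxBirkhoffSum_pos :
    ⋃ N, {x | 0 < maxBirkhoffSum φ g N x} = {x | ∃ n, 0 < birkhoffSum φ g n x} := by
  ext x
  simp only [Set.mem_iUnion, Set.mem_ofPred_eq]
  constructor
  · rintro ⟨N, hN⟩
    obtain ⟨n, -, hn⟩ := exists_birkhoffSum_eq_maxBirkhoffSum (φ := φ) (g := g) N x
    exact ⟨n, hn ▸ hN⟩
  · rintro ⟨n, hn⟩
    exact ⟨n, hn.trans_le (birkhoffSum_le_maxBirkhoffSum le_rfl x)⟩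

variable [MeasurableSpace X] {μ : Measure X}

theorem MeasurePreserving.integrable_birkhoffSum (hφ : MeasurePreserving φ μ μ)
    (hg : Integrable g μ) (n : ℕ) : Integrable (birkhoffSum φ g n) μ := by
  unfold birkhoffSum
  exact integrable_finsetSum _ fun i _ => (hφ.iterate i).integrable_comp_of_integrable hg

theorem MeasurePreserving.integrable_maxBirkhoffSum (hφ : MeasurePreserving φ μ μ)
    (hg : Integrable g μ) (N : ℕ) : Integrable (maxBirkhoffSum φ g N) μ :=
  sup'_induction (p := (Integrable · μ)) _ _ (fun _ h₁ _ h₂ => h₁.sup h₂)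
    fun n _ => hφ.integrable_birkhoffSum hg n

theorem MeasurePreserving.setIntegral_setOf_maxBirkhoffSum_pos_nonneg
    (hφ : MeasurePreserving φ μ μ) (hg : Integrable g μ) (N : ℕ) :
    0 ≤ ∫ x in {x | 0 < maxBirkhoffSum φ g N x}, g x ∂μ := by
  set M := maxBirkhoffSum φ g N
  set A := {x | 0 < M x}
  have hM : Integrable M μ := hφ.integrable_maxBirkhoffSum hg N
  have hMφ : Integrable (fun x => M (φ x)) μ := hφ.integrable_comp_of_integrable hM
  have hA : NullMeasurableSet A μ :=
    nullMeasurableSet_lt aemeasurable_const hM.aemeasurable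
  have hMA : ∫ x in A, M x ∂μ = ∫ x, M x ∂μ :=
    setIntegral_eq_integral_of_forall_compl_eq_zero fun x hx =>
      le_antisymm (not_lt.mp hx) (maxBirkhoffSum_nonneg N x)
  have hMφA : ∫ x in A, M (φ x) ∂μ ≤ ∫ x, M (φ x) ∂μ :=
    setIntegral_le_integral hMφ (ae_of_all _ fun x => maxBirkhoffSum_nonneg N (φ x))
  have hMφ_eq : ∫ x, M (φ x) ∂μ = ∫ x, M x ∂μ := by
    rw [← integral_map hφ.aemeasurable (by rw [hφ.map_eq]; exact hM.aestronglyMeasurable),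
      hφ.map_eq]
  have garsia : ∫ x in A, (M x - M (φ x)) ∂μ ≤ ∫ x in A, g x ∂μ :=
    setIntegral_mono_ae_restrict (hM.sub hMφ).integrableOn hg.integrableOn
      ((ae_restrict_mem₀ hA).mono fun x hx => maxBirkhoffSum_sub_maxBirkhoffSum_apply_le hx)
  rw [integral_sub hM.integrableOn hMφ.integrableOn] at garsia
  linarith

theorem MeasurePreserving.setIntegral_setOf_exists_birkhoffSum_pos_nonneg
    (hφ : MeasurePreserving φ μ μ) (hg : Integrable g μ) :
    0 ≤ ∫ x in {x | ∃ n, 0 < birkhoffSum φ g n x}, g x ∂μ := by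
  have hA (N : ℕ) : NullMeasurableSet {x | 0 < maxBirkhoffSum φ g N x} μ :=
    nullMeasurableSet_lt aemeasurable_const (hφ.integrable_maxBirkhoffSum hg N).aemeasurable
  have hmono : Monotone fun N => {x | 0 < maxBirkhoffSum φ g N x} :=
    fun N N' h x hx => hx.trans_le (monotone_maxBirkhoffSum x h)
  have := tendsto_setIntegral_of_monotone₀ hA hmono hg.integrableOn
  rw [iUnion_setOf_maxBirkhoffSum_pos] at this
  exact ge_of_tendsto' this (hφ.setIntegral_setOf_maxBirkhoffSum_pos_nonneg hg)

end MeasureTheory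

theorem birkhoffSum_sub_const {X : Type*} (φ : X → X) (f : X → ℝ) (α : ℝ) (n : ℕ) (x : X) :
    birkhoffSum φ (fun y => f y - α) n x = birkhoffSum φ f n x - n * α := by
  simp [birkhoffSum, sum_sub_distrib]

theorem setOf_exists_lt_birkhoffSum_div {X : Type*} (φ : X → X) (f : X → ℝ) (α : ℝ) :
    {x | ∃ n : ℕ, 0 < n ∧ α < birkhoffSum φ f n x / n} =
      {x | ∃ n, 0 < birkhoffSum φ (fun y => f y - α) n x} := by
  ext x
  simp only [Set.mem_ofPred_eq, birkhoffSum_sub_const, sub_pos]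
  constructor
  · rintro ⟨n, hn, h⟩
    exact ⟨n, by rwa [lt_div_iff₀ (by exact_mod_cast hn), mul_comm] at h⟩
  · rintro ⟨n, h⟩
    obtain _ | n := n
    · simp [birkhoffSum_zero] at h
    · exact ⟨n + 1, n.succ_pos, by rwa [lt_div_iff₀ (by positivity), mul_comm]⟩

theorem stmt14_general {X : Type*} [MeasurableSpace X] (μ : Measure X) [IsProbabilityMeasure μ]
    (φ : X → X) (hφ : MeasurePreserving φ μ μ)
    (f : X → ℝ) (hfi : Integrable f μ)
    (S : ℕ → X → ℝ) (hS : ∀ n x, S n x = ∑ i ∈ Finset.range n, f (φ^[i] x))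
    (α : ℝ) :
    α * (μ {x | ∃ n : ℕ, 0 < n ∧ α < S n x / n}).toReal ≤
      ∫ x in {x | ∃ n : ℕ, 0 < n ∧ α < S n x / n}, f x ∂μ := by
  obtain rfl : S = birkhoffSum φ f := funext₂ hS
  rw [setOf_exists_lt_birkhoffSum_div]
  have h := hφ.setIntegral_setOf_exists_birkhoffSum_pos_nonneg (g := fun x => f x - α)
    (hfi.sub (integrable_const α))
  rw [integral_sub hfi.integrableOn (integrable_const α).integrableOn, setIntegral_const,
    smul_eq_mul] at h
  rw [mul_comm]
  exact sub_nonneg.mp h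

theorem stmt14 {X : Type*} [MeasurableSpace X] (μ : Measure X) [IsProbabilityMeasure μ]
    (φ : X → X) (hbij : Function.Bijective φ) (hφ : MeasurePreserving φ μ μ)
    (f : X → ℝ) (hf : Measurable f) (hfi : Integrable f μ)
    (S : ℕ → X → ℝ) (hS : ∀ n x, S n x = ∑ i ∈ Finset.range n, f (φ^[i] x))
    (α : ℝ) :
    α * (μ {x | ∃ n : ℕ, 0 < n ∧ α < S n x / n}).toReal ≤
      ∫ x in {x | ∃ n : ℕ, 0 < n ∧ α < S n x / n}, f x ∂μ :=
  stmt14_general μ φ hφ f hfi S hS α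
end
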